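/- Let A ∈ ℝ^{n×n}, C ∈ ℝ^{q×n}, Q, Σ₀ ∈ ℝ^{n×n} symmetric positive semidefinite, and let X ∈ ℝ^{n×n} be symmetric positive definite with C X Cᵀ positive definite, satisfying the discrete-time algebraic Riccati equation X = A X Aᵀ − A X Cᵀ (C X Cᵀ)⁻¹ C X Aᵀ + Q. Set K := X Cᵀ (C X Cᵀ)⁻¹ and P := X − K C X. Define Σ(0) = Σ₀, Σ(t+1) = A Σ(t) Aᵀ + Q, and Σ̄(0) = Σ₀ − P, Σ̄(t+1) = A Σ̄(t) Aᵀ + K (C X Cᵀ) Kᵀ. Then for every t ≥ 0, Σ(t) = Σ̄(t) + P, and consequently C A^j Σ(t) Cᵀ = C A^j Σ̄(t) Cᵀ for all j, t ≥ 0. -/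

import Mathlib

open Matrix

/-!
Write `M := C X Cᵀ`. Since `K M = X Cᵀ`, the posterior covariance `P = X - K C X` satisfies
`P Cᵀ = 0`, and for symmetric `X` the innovation term is `K M Kᵀ = K C X = X - P`. The Riccati
equation says exactly `A P Aᵀ + Q = X`, so `A P Aᵀ + Q = K M Kᵀ + P`: adding `P` to a solution of
the abstract recursion gives a solution of the original one. As `P Cᵀ = 0`, the shift by `P` is
invisible in every output covariance `C Aʲ Σ(t) Cᵀ`.
-/

section KalmanGain

variable {m n R : Type*} [Fintype m] [Fintype n] [DecidableEq m] [CommRing R]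

noncomputable def kalmanGain (C : Matrix m n R) (X : Matrix n n R) : Matrix n m R :=
  X * Cᵀ * (C * X * Cᵀ)⁻¹

noncomputable def posteriorCov (C : Matrix m n R) (X : Matrix n n R) : Matrix n n R :=
  X - kalmanGain C X * (C * X)

variable {C : Matrix m n R} {X : Matrix n n R}

theorem kalmanGain_mul (hM : IsUnit (C * X * Cᵀ).det) :
    kalmanGain C X * (C * X * Cᵀ) = X * Cᵀ := by
  rw [kalmanGain, Matrix.mul_assoc, nonsing_inv_mul _ hM, Matrix.mul_one]

theorem posteriorCov_mul_transpose (hM : IsUnit (C * X * Cᵀ).det) :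
    posteriorCov C X * Cᵀ = 0 := by
  rw [posteriorCov, Matrix.sub_mul, Matrix.mul_assoc, kalmanGain_mul hM, sub_self]

theorem kalmanGain_transpose (hX : X.IsSymm) :
    (kalmanGain C X)ᵀ = (C * X * Cᵀ)⁻¹ * (C * X) := by
  have hM : (C * X * Cᵀ)ᵀ = C * X * Cᵀ := by
    rw [transpose_mul, transpose_mul, transpose_transpose, hX.eq, Matrix.mul_assoc]
  rw [kalmanGain, transpose_mul, transpose_nonsing_inv, hM, transpose_mul, transpose_transpose,
    hX.eq]

theorem kalmanGain_mul_mul_transpose_add_posteriorCov (hX : X.IsSymm)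
    (hM : IsUnit (C * X * Cᵀ).det) :
    kalmanGain C X * (C * X * Cᵀ) * (kalmanGain C X)ᵀ + posteriorCov C X = X := by
  rw [kalmanGain_transpose hX, Matrix.mul_assoc, ← Matrix.mul_assoc (C * X * Cᵀ),
    mul_nonsing_inv _ hM, Matrix.one_mul, posteriorCov, add_sub_cancel]

theorem mul_posteriorCov_mul_transpose_add_of_riccati {A Q : Matrix n n R}
    (hDARE : X = A * X * Aᵀ - A * X * Cᵀ * (C * X * Cᵀ)⁻¹ * (C * X * Aᵀ) + Q) :
    A * posteriorCov C X * Aᵀ + Q = X := by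
  conv_rhs => rw [hDARE]
  rw [posteriorCov, kalmanGain]
  simp only [Matrix.mul_sub, Matrix.sub_mul, Matrix.mul_assoc]

end KalmanGain

theorem lyapunov_iterate_eq_add {n R : Type*} [Fintype n] [Semiring R]
    {A P Q W : Matrix n n R} {S Sb : ℕ → Matrix n n R}
    (hstep : A * P * Aᵀ + Q = W + P) (hzero : S 0 = Sb 0 + P)
    (hS : ∀ t, S (t + 1) = A * S t * Aᵀ + Q) (hSb : ∀ t, Sb (t + 1) = A * Sb t * Aᵀ + W) :
    ∀ t, S t = Sb t + P
  | 0 => hzero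
  | t + 1 => by
    rw [hS, hSb, lyapunov_iterate_eq_add hstep hzero hS hSb t, Matrix.mul_add, Matrix.add_mul,
      add_assoc, hstep, add_assoc]

theorem time_invariant_covariance_identity_general {n q : ℕ}
    (A : Matrix (Fin n) (Fin n) ℝ) (C : Matrix (Fin q) (Fin n) ℝ)
    (Q S0 X : Matrix (Fin n) (Fin n) ℝ)
    (hX : X.PosDef) (hCX : (C * X * Cᵀ).PosDef)
    (hDARE : X = A * X * Aᵀ - A * X * Cᵀ * (C * X * Cᵀ)⁻¹ * (C * X * Aᵀ) + Q)
    (K : Matrix (Fin n) (Fin q) ℝ) (P : Matrix (Fin n) (Fin n) ℝ)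
    (hK : K = X * Cᵀ * (C * X * Cᵀ)⁻¹)
    (hP : P = X - K * (C * X))
    (S Sb : ℕ → Matrix (Fin n) (Fin n) ℝ)
    (hSzero : S 0 = S0)
    (hS : ∀ t, S (t + 1) = A * S t * Aᵀ + Q)
    (hSbzero : Sb 0 = S0 - P)
    (hSb : ∀ t, Sb (t + 1) = A * Sb t * Aᵀ + K * (C * X * Cᵀ) * Kᵀ) :
    (∀ t, S t = Sb t + P) ∧
      ∀ j t : ℕ, C * A ^ j * S t * Cᵀ = C * A ^ j * Sb t * Cᵀ := by
  subst hK hP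
  have hXsymm : X.IsSymm := isHermitian_iff_isSymm.mp hX.isHermitian
  have hM : IsUnit (C * X * Cᵀ).det := (isUnit_iff_isUnit_det _).mp hCX.isUnit
  have hstep : A * posteriorCov C X * Aᵀ + Q =
      kalmanGain C X * (C * X * Cᵀ) * (kalmanGain C X)ᵀ + posteriorCov C X := by
    rw [mul_posteriorCov_mul_transpose_add_of_riccati hDARE,
      kalmanGain_mul_mul_transpose_add_posteriorCov hXsymm hM]
  have hshift := lyapunov_iterate_eq_add hstep (by rw [hSzero, hSbzero]; exact (sub_add_cancel _ _).symm) hS hSb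
  refine ⟨hshift, fun j t => ?_⟩
  rw [hshift t, Matrix.mul_add, Matrix.add_mul, Matrix.mul_assoc _ (posteriorCov C X),
    posteriorCov_mul_transpose hM, Matrix.mul_zero, add_zero]

/-- **Covariance identity for the time-invariant abstract model (Theorem 2 of the paper).**
Let `X ≻ 0` solve the DARE `X = A X Aᵀ - A X Cᵀ (C X Cᵀ)⁻¹ C X Aᵀ + Q` with `C X Cᵀ ≻ 0`, and
set `K := X Cᵀ (C X Cᵀ)⁻¹` and `P := X - K C X`. If `Σ t` (here `S t`) is the state covariance
of the original system (`Σ 0 = Σ₀`, `Σ (t+1) = A Σ t Aᵀ + Q`) and `Σ̄ t` (here `Sb t`) that of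
the time-invariant abstract model (`Σ̄ 0 = Σ₀ - P`, `Σ̄ (t+1) = A Σ̄ t Aᵀ + K (C X Cᵀ) Kᵀ`),
then `Σ t = Σ̄ t + P` for all `t`, and consequently
`C A^j Σ t Cᵀ = C A^j Σ̄ t Cᵀ` for all `j, t`. -/
theorem time_invariant_covariance_identity {n q : ℕ}
    (A : Matrix (Fin n) (Fin n) ℝ) (C : Matrix (Fin q) (Fin n) ℝ)
    (Q S0 X : Matrix (Fin n) (Fin n) ℝ)
    (hQ : Q.PosSemidef) (hS0 : S0.PosSemidef)
    (hX : X.PosDef) (hCX : (C * X * Cᵀ).PosDef)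
    (hDARE : X = A * X * Aᵀ - A * X * Cᵀ * (C * X * Cᵀ)⁻¹ * (C * X * Aᵀ) + Q)
    (K : Matrix (Fin n) (Fin q) ℝ) (P : Matrix (Fin n) (Fin n) ℝ)
    (hK : K = X * Cᵀ * (C * X * Cᵀ)⁻¹)
    (hP : P = X - K * (C * X))
    (S Sb : ℕ → Matrix (Fin n) (Fin n) ℝ)
    (hSzero : S 0 = S0)
    (hS : ∀ t, S (t + 1) = A * S t * Aᵀ + Q)
    (hSbzero : Sb 0 = S0 - P)
    (hSb : ∀ t, Sb (t + 1) = A * Sb t * Aᵀ + K * (C * X * Cᵀ) * Kᵀ) :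
    (∀ t, S t = Sb t + P) ∧
      ∀ j t : ℕ, C * A ^ j * S t * Cᵀ = C * A ^ j * Sb t * Cᵀ :=
  time_invariant_covariance_identity_general A C Q S0 X hX hCX hDARE K P hK hP S Sb hSzero hS
    hSbzero hSb
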